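/- Suppose Λ ⊂ ℕ satisfies: there exist C > 0 and α ≥ 1/2 such that ‖f‖_q ≤ C q^α ‖f‖₂ for all q > 2 and all trigonometric polynomials f with Fourier spectrum in Λ. Then for every finite A ⊂ Λ with |A| = n, the ψ₂-norm of the Dirichlet kernel over A satisfies ‖Σ_{j∈A} e_j‖_{ψ₂} ≲ n^{1 − 1/(4α)}. -/

import Mathlib

/-!
For `D_A = ∑_{j ∈ A} e_j` with `|A| = n`, the hypothesis on `Λ` gives `‖D_A‖_q ≤ C q^α √n`,
while trivially `‖D_A‖_q ≤ ‖D_A‖_∞ ≤ n`. The weighted geometric mean of these two bounds with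
weight `1/(2α)` on the first is `C^{1/(2α)} n^{1 - 1/(4α)} √q`, which is what splitting at
`q = n^{1/(2α)}` gives. So all moments of `D_A` grow like `K √q` with
`K ≍ n^{1 - 1/(4α)}`, and such growth bounds the `ψ₂` norm: expanding `e^{t²} - 1` in its power
series and using `k^k ≤ e^k k!`, the `k`-th term of `∫ ψ₂(|D_A| / λ)` is at most `2^{-k}` for
`λ = 2 √e K`.
-/

open MeasureTheory

/-- The `ψ₂`-Orlicz (Luxemburg) norm for complex-valued functions,
`ψ₂(x) = e^{x²} - 1`. -/
noncomputable def psi2Norm {Ω : Type*} [MeasurableSpace Ω] (μ : Measure Ω)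
    (f : Ω → ℂ) : ℝ :=
  sInf {l : ℝ | 0 < l ∧ ∫ ω, (Real.exp ((‖f ω‖ / l) ^ 2) - 1) ∂μ ≤ 1}

open scoped Nat

lemma min_le_rpow_mul_rpow {a b θ : ℝ} (ha : 0 ≤ a) (hb : 0 ≤ b) (hθ₀ : 0 ≤ θ) (hθ₁ : θ ≤ 1) :
    min a b ≤ a ^ θ * b ^ (1 - θ) :=
  calc min a b = min a b ^ θ * min a b ^ (1 - θ) := by
        rw [← Real.rpow_add' (le_min ha hb) (by norm_num), add_sub_cancel, Real.rpow_one]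
    _ ≤ a ^ θ * b ^ (1 - θ) :=
        mul_le_mul (Real.rpow_le_rpow (le_min ha hb) (min_le_left a b) hθ₀)
          (Real.rpow_le_rpow (le_min ha hb) (min_le_right a b) (by linarith))
          (by positivity) (by positivity)

lemma min_mul_rpow_mul_sqrt_le {C α n q : ℝ} (hC : 0 ≤ C) (hα : 1 / 2 ≤ α) (hn : 0 ≤ n)
    (hq : 0 ≤ q) :
    min (C * q ^ α * √n) n ≤ C ^ (1 / (2 * α)) * n ^ (1 - 1 / (4 * α)) * √q := by
  have hα₀ : 0 < α := by linarith
  have hθ₁ : 1 / (2 * α) ≤ 1 := by rw [div_le_one (by positivity)]; linarith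
  calc _ ≤ (C * q ^ α * √n) ^ (1 / (2 * α)) * n ^ (1 - 1 / (2 * α)) :=
        min_le_rpow_mul_rpow (by positivity) hn (by positivity) hθ₁
    _ = C ^ (1 / (2 * α)) * (n ^ (1 / (4 * α)) * n ^ (1 - 1 / (2 * α))) * √q := by
        rw [Real.mul_rpow (by positivity) (by positivity), Real.mul_rpow hC (by positivity),
          ← Real.rpow_mul hq, Real.sqrt_eq_rpow, Real.sqrt_eq_rpow, ← Real.rpow_mul hn,
          show α * (1 / (2 * α)) = 1 / 2 by field_simp,
          show 1 / 2 * (1 / (2 * α)) = 1 / (4 * α) by field_simp; ring]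
        ring
    _ = _ := by
        rw [← Real.rpow_add' hn
          (ne_of_gt (by linarith [show 0 < 1 / (4 * α) by positivity]))]
        congr 3
        field_simp; ring

lemma pow_div_factorial_le_half_pow (k : ℕ) :
    ((k : ℝ) / (2 * Real.exp 1)) ^ k / k ! ≤ (1 / 2) ^ k := by
  have hk : (k : ℝ) ^ k / k ! ≤ Real.exp 1 ^ k := by
    rw [← Real.exp_nat_mul, mul_one]
    exact Real.pow_div_factorial_le_exp _ k.cast_nonneg k
  calc ((k : ℝ) / (2 * Real.exp 1)) ^ k / k !
      = (1 / 2) ^ k * ((k : ℝ) ^ k / k !) / Real.exp 1 ^ k := by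
        rw [div_pow, mul_pow]; field_simp; rw [← mul_pow]; norm_num
    _ ≤ (1 / 2) ^ k * Real.exp 1 ^ k / Real.exp 1 ^ k := by gcongr
    _ = (1 / 2) ^ k := by field_simp

lemma Real.hasSum_pow_succ_div_factorial (y : ℝ) :
    HasSum (fun k : ℕ ↦ y ^ (k + 1) / (k + 1)!) (Real.exp y - 1) := by
  have := NormedSpace.expSeries_div_hasSum_exp y
  rw [← Real.exp_eq_exp_ℝ, ← hasSum_nat_add_iff' 1] at this
  simpa using this

lemma MeasureTheory.MemLp.integral_norm_pow_eq {Ω E : Type*} [MeasurableSpace Ω] {μ : Measure Ω}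
    [NormedAddCommGroup E] {f : Ω → E} {k : ℕ} (hf : MemLp f k μ) (hk : k ≠ 0) :
    ∫ x, ‖f x‖ ^ k ∂μ = (eLpNorm f k μ).toReal ^ k := by
  have hk' : (0 : ℝ) < k := by positivity
  rw [hf.eLpNorm_eq_integral_rpow_norm (by simpa using hk) (by simp), ENNReal.toReal_natCast,
    ENNReal.toReal_ofReal (by positivity), ← Real.rpow_natCast, ← Real.rpow_mul
    (integral_nonneg fun x ↦ by positivity), inv_mul_cancel₀ hk'.ne', Real.rpow_one]
  simp_rw [Real.rpow_natCast]

section Psi2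

variable {Ω : Type*} [MeasurableSpace Ω] {μ : Measure Ω}

lemma psi2Norm_zero : psi2Norm μ (fun _ ↦ 0) = 0 := by
  have : {l : ℝ | 0 < l ∧ ∫ _, (Real.exp ((‖(0 : ℂ)‖ / l) ^ 2) - 1) ∂μ ≤ 1} = Set.Ioi 0 := by
    ext l; simp
  rw [psi2Norm, this, csInf_Ioi]

lemma psi2Norm_le {f : Ω → ℂ} {l : ℝ} (hl : 0 < l)
    (h : ∫ ω, (Real.exp ((‖f ω‖ / l) ^ 2) - 1) ∂μ ≤ 1) : psi2Norm μ f ≤ l :=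
  csInf_le ⟨0, fun _ hy ↦ hy.1.le⟩ ⟨hl, h⟩

variable {f : Ω → ℂ} {K : ℝ}

lemma integral_sq_div_pow_div_factorial_le (hK : 0 < K) {k : ℕ} (hk : k ≠ 0)
    (hf : MemLp f (2 * k : ℕ) μ) (hmom : (eLpNorm f (2 * k : ℕ) μ).toReal ≤ K * √(2 * k)) :
    ∫ x, ((‖f x‖ / (2 * √(Real.exp 1) * K)) ^ 2) ^ k / k ! ∂μ ≤ (1 / 2) ^ k := by
  set l := 2 * √(Real.exp 1) * K with hl_def
  have hl : 0 < l := by positivity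
  calc ∫ x, ((‖f x‖ / l) ^ 2) ^ k / k ! ∂μ
      = (∫ x, ‖f x‖ ^ (2 * k) ∂μ) / (l ^ (2 * k) * k !) := by
        rw [← integral_div]
        congr with x
        rw [← pow_mul, div_pow, div_div]
    _ ≤ (K * √(2 * k)) ^ (2 * k) / (l ^ (2 * k) * k !) := by
        rw [hf.integral_norm_pow_eq (by omega)]
        gcongr
    _ = ((k : ℝ) / (2 * Real.exp 1)) ^ k / k ! := by
        rw [← div_div, ← div_pow, pow_mul, div_pow, mul_pow, Real.sq_sqrt (by positivity), hl_def,
          mul_pow, mul_pow, Real.sq_sqrt (Real.exp_pos 1).le]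
        congr 2
        field_simp
    _ ≤ (1 / 2) ^ k := pow_div_factorial_le_half_pow k

lemma psi2Norm_le_of_eLpNorm_le_mul_sqrt (hK : 0 < K) (hf : ∀ k : ℕ, MemLp f (2 * k : ℕ) μ)
    (hmom : ∀ k : ℕ, k ≠ 0 → (eLpNorm f (2 * k : ℕ) μ).toReal ≤ K * √(2 * k)) :
    psi2Norm μ f ≤ 2 * √(Real.exp 1) * K := by
  set l := 2 * √(Real.exp 1) * K
  set F : ℕ → Ω → ℝ := fun k x ↦ ((‖f x‖ / l) ^ 2) ^ (k + 1) / (k + 1)!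
  have hF_nonneg (k : ℕ) (x : Ω) : 0 ≤ F k x := by positivity
  have hF_int (k : ℕ) : Integrable (F k) μ := by
    have := ((hf (k + 1)).integrable_norm_pow (by omega)).div_const (l ^ (2 * (k + 1)) * (k + 1)!)
    refine this.congr (ae_of_all _ fun x ↦ ?_)
    simp only [F]
    rw [← pow_mul, div_pow, div_div]
  have hF_le (k : ℕ) : ∫ x, F k x ∂μ ≤ (1 / 2) ^ (k + 1) :=
    integral_sq_div_pow_div_factorial_le hK k.succ_ne_zero (hf _) (hmom _ k.succ_ne_zero)
  have h_geom : Summable fun k : ℕ ↦ (1 / 2 : ℝ) ^ (k + 1) :=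
    (summable_nat_add_iff 1).mpr summable_geometric_two
  have hF_sum : Summable fun k ↦ ∫ x, F k x ∂μ :=
    h_geom.of_nonneg_of_le (fun k ↦ integral_nonneg (hF_nonneg k)) hF_le
  refine psi2Norm_le (by positivity) ?_
  calc ∫ x, (Real.exp ((‖f x‖ / l) ^ 2) - 1) ∂μ = ∑' k, ∫ x, F k x ∂μ := by
        rw [integral_tsum_of_summable_integral_norm hF_int]
        · congr with x
          exact (Real.hasSum_pow_succ_div_factorial _).tsum_eq.symm
        · simpa only [Real.norm_of_nonneg (hF_nonneg _ _)] using hF_sum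
    _ ≤ ∑' k : ℕ, (1 / 2 : ℝ) ^ (k + 1) := hF_sum.tsum_le_tsum hF_le h_geom
    _ = 1 := by
        simp_rw [pow_succ]
        rw [tsum_mul_right, tsum_geometric_two]
        norm_num

end Psi2

lemma toReal_eLpNorm_le_rpow_mul_sqrt {Ω E : Type*} [MeasurableSpace Ω] {μ : Measure Ω}
    [IsProbabilityMeasure μ] [NormedAddCommGroup E] {f : Ω → E} {C α n : ℝ}
    (hC : 0 ≤ C) (hα : 1 / 2 ≤ α) (hn : 1 ≤ n)
    (hf_sup : ∀ᵐ x ∂μ, ‖f x‖ ≤ n) (hf_two : (eLpNorm f 2 μ).toReal ≤ √n)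
    (hf : ∀ q : ℝ, 2 < q →
      (eLpNorm f (ENNReal.ofReal q) μ).toReal ≤ C * q ^ α * (eLpNorm f 2 μ).toReal)
    {q : ℝ} (hq : 2 ≤ q) :
    (eLpNorm f (ENNReal.ofReal q) μ).toReal ≤
      max 1 (C ^ (1 / (2 * α))) * n ^ (1 - 1 / (4 * α)) * √q := by
  have hn₀ : 0 ≤ n := by linarith
  rcases hq.eq_or_lt with rfl | hq
  · have he : 1 / 2 ≤ 1 - 1 / (4 * α) := by
      have : 1 / (4 * α) ≤ 1 / 2 := by rw [div_le_div_iff₀] <;> linarith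
      linarith
    calc (eLpNorm f (ENNReal.ofReal 2) μ).toReal ≤ n ^ (1 / 2 : ℝ) := by
          simpa [Real.sqrt_eq_rpow] using hf_two
      _ ≤ 1 * n ^ (1 - 1 / (4 * α)) * 1 := by
          simpa using Real.rpow_le_rpow_of_exponent_le hn he
      _ ≤ _ := by
          gcongr
          · exact le_max_left _ _
          · simp
  · have hf_le_sup : (eLpNorm f (ENNReal.ofReal q) μ).toReal ≤ n := by
      refine ENNReal.toReal_le_of_le_ofReal hn₀ ?_
      simpa using eLpNorm_le_of_ae_bound (p := ENNReal.ofReal q) hf_sup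
    calc _ ≤ min (C * q ^ α * √n) n :=
          le_min ((hf q hq).trans (mul_le_mul_of_nonneg_left hf_two (by positivity)))
            hf_le_sup
      _ ≤ C ^ (1 / (2 * α)) * n ^ (1 - 1 / (4 * α)) * √q :=
          min_mul_rpow_mul_sqrt_le hC hα hn₀ (by linarith)
      _ ≤ _ := by gcongr; exact le_max_right _ _

section Dirichlet

open AddCircle

variable {T : ℝ}

noncomputable def dirichletKernel (A : Finset ℤ) (x : AddCircle T) : ℂ := ∑ k ∈ A, fourier k x

lemma continuous_dirichletKernel (A : Finset ℤ) : Continuous (dirichletKernel (T := T) A) :=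
  continuous_finsetSum _ fun k _ ↦ (fourier k).continuous

lemma norm_dirichletKernel_le (A : Finset ℤ) (x : AddCircle T) :
    ‖dirichletKernel A x‖ ≤ A.card :=
  (norm_sum_le _ _).trans_eq (by simp [fourier_apply, Circle.norm_coe])

lemma toReal_eLpNorm_dirichletKernel_two [Fact (0 < T)] (A : Finset ℤ) :
    (eLpNorm (dirichletKernel A) 2 (haarAddCircle (T := T))).toReal = √A.card := by
  have h_toLp : ContinuousMap.toLp 2 haarAddCircle ℂ (∑ k ∈ A, fourier (T := T) k) =
      ∑ k ∈ A, fourierLp 2 k :=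
    map_sum _ _ _
  have h_inner : inner ℂ (∑ k ∈ A, fourierLp (T := T) 2 k) (∑ k ∈ A, fourierLp 2 k) = A.card := by
    simpa using orthonormal_fourier.inner_sum (fun _ ↦ 1) (fun _ ↦ 1) A
  calc (eLpNorm (dirichletKernel A) 2 haarAddCircle).toReal
      = ‖ContinuousMap.toLp 2 haarAddCircle ℂ (∑ k ∈ A, fourier (T := T) k)‖ := by
        rw [Lp.norm_def, eLpNorm_congr_ae (ContinuousMap.coeFn_toLp _ _)]
        congr with x
        simp [dirichletKernel]
    _ = √A.card := by
        rw [h_toLp, @norm_eq_sqrt_re_inner ℂ, h_inner]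
        simp

lemma volume_eq_haarAddCircle_one : (volume : Measure (AddCircle (1 : ℝ))) = haarAddCircle := by
  rw [volume_eq_smul_haarAddCircle, ENNReal.ofReal_one, one_smul]

end Dirichlet

/-- If `Λ` satisfies `‖f‖_q ≤ C q^α ‖f‖₂` for all `q > 2` and all polynomials with
spectrum in `Λ`, then for every finite `A ⊆ Λ` with `|A| = n`, the Dirichlet kernel
over `A` satisfies `‖Σ_{j∈A} e_j‖_{ψ₂} ≲ n^{1 - 1/(4α)}`. -/
theorem psi2_dirichlet_kernel_bound (Λ : Set ℤ) (C α : ℝ) (hC : 0 < C)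
    (hα : (1 / 2 : ℝ) ≤ α)
    (h : ∀ q : ℝ, 2 < q → ∀ A : Finset ℤ, ↑A ⊆ Λ → ∀ c : ℤ → ℂ,
      (eLpNorm (fun x : AddCircle (1 : ℝ) => ∑ k ∈ A, c k * fourier k x)
          (ENNReal.ofReal q) volume).toReal ≤
        C * q ^ α *
          (eLpNorm (fun x : AddCircle (1 : ℝ) => ∑ k ∈ A, c k * fourier k x)
            2 volume).toReal) :
    ∃ D : ℝ, 0 < D ∧ ∀ A : Finset ℤ, ↑A ⊆ Λ →
      psi2Norm (volume : Measure (AddCircle (1 : ℝ)))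
          (fun x => ∑ k ∈ A, fourier k x) ≤
        D * (A.card : ℝ) ^ (1 - 1 / (4 * α)) := by
  refine ⟨2 * √(Real.exp 1) * max 1 (C ^ (1 / (2 * α))), by positivity, fun A hA ↦ ?_⟩
  rcases A.eq_empty_or_nonempty with rfl | hA_ne
  · simp only [Finset.sum_empty, psi2Norm_zero]
    positivity
  show psi2Norm volume (dirichletKernel A) ≤ _
  have : IsProbabilityMeasure (volume : Measure (AddCircle (1 : ℝ))) := by
    rw [volume_eq_haarAddCircle_one]; infer_instance
  have hn : (1 : ℝ) ≤ A.card := by exact_mod_cast hA_ne.card_pos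
  have h_sup : ∀ x : AddCircle (1 : ℝ), ‖dirichletKernel A x‖ ≤ A.card :=
    norm_dirichletKernel_le A
  have h_two : (eLpNorm (dirichletKernel (T := 1) A) 2 volume).toReal = √A.card := by
    rw [volume_eq_haarAddCircle_one, toReal_eLpNorm_dirichletKernel_two]
  have h_Λ (q : ℝ) (hq : 2 < q) :
      (eLpNorm (dirichletKernel (T := 1) A) (ENNReal.ofReal q) volume).toReal ≤
      C * q ^ α * (eLpNorm (dirichletKernel (T := 1) A) 2 volume).toReal := by
    have h_one := h q hq A hA 1
    simp only [Pi.one_apply, one_mul] at h_one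
    exact h_one
  rw [mul_assoc]
  refine psi2Norm_le_of_eLpNorm_le_mul_sqrt (by positivity)
    (fun k ↦ .of_bound (continuous_dirichletKernel A).aestronglyMeasurable _ (ae_of_all _ h_sup))
    fun k hk ↦ ?_
  have hk : (2 : ℝ) ≤ 2 * k := by
    have : (1 : ℝ) ≤ k := by exact_mod_cast Nat.one_le_iff_ne_zero.mpr hk
    linarith
  simpa using toReal_eLpNorm_le_rpow_mul_sqrt hC.le hα hn (ae_of_all _ h_sup)
    h_two.le h_Λ hk
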